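/- For a collection of n circular arcs representing voters' approval among N candidates placed on the circle (so each arc's endpoints lie at candidate positions and the arc covers exactly the candidates its voter approves), if the maximum number of arcs containing a common candidate is M, then the number of intersecting pairs of arcs is at most (2nM − n²/N − n)/2. -/
import Mathlib


open scoped Classical

/-- The circle is parametrized by the half-open interval `[0,1)`.  `memArc x y p`
says that the point `p` lies on the closed arc going clockwise from `x` to `y`
(wrapping around the circle when `y` precedes `x`). -/
def memArc (x y p : ℝ) : Prop :=
  if x ≤ y then x ≤ p ∧ p ≤ y else x ≤ p ∨ p ≤ y

/-- A circular arc, given by its left endpoint `x` and right endpoint `y`;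
the arc runs clockwise from `x` to `y`. -/
structure Arc where
  x : ℝ
  y : ℝ

/-- Both endpoints of the arc lie on the circle `[0,1)`. -/
def Arc.InCircle (A : Arc) : Prop :=
  A.x ∈ Set.Ico (0 : ℝ) 1 ∧ A.y ∈ Set.Ico (0 : ℝ) 1

/-- The point `p` lies on the arc `A`. -/
def Arc.Mem (A : Arc) (p : ℝ) : Prop := memArc A.x A.y p

/-- Two arcs intersect: some point of the circle lies on both. -/
def Intersects (A B : Arc) : Prop :=
  ∃ p ∈ Set.Ico (0 : ℝ) 1, A.Mem p ∧ B.Mem p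

/-- Two arcs doubly intersect: each arc contains both endpoints of the other. -/
def DoublyIntersects (A B : Arc) : Prop :=
  A.Mem B.x ∧ A.Mem B.y ∧ B.Mem A.x ∧ B.Mem A.y

/-- The agreement number of a point `p`: the number of arcs of the family containing it. -/
noncomputable def agree {n : ℕ} (A : Fin n → Arc) (p : ℝ) : ℕ :=
  (Finset.univ.filter fun i => (A i).Mem p).card

/-- `M` is the maximum agreement number of the family. -/
def IsMaxAgreement {n : ℕ} (A : Fin n → Arc) (M : ℕ) : Prop :=
  (∀ p ∈ Set.Ico (0 : ℝ) 1, agree A p ≤ M) ∧ ∃ p ∈ Set.Ico (0 : ℝ) 1, agree A p = M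

/-- `m` is the minimum agreement number of the family. -/
def IsMinAgreement {n : ℕ} (A : Fin n → Arc) (m : ℕ) : Prop :=
  (∀ p ∈ Set.Ico (0 : ℝ) 1, m ≤ agree A p) ∧ ∃ p ∈ Set.Ico (0 : ℝ) 1, agree A p = m

/-- All `2n` endpoints of the family are pairwise distinct. -/
def DistinctEndpoints {n : ℕ} (A : Fin n → Arc) : Prop :=
  Function.Injective fun q : Fin n × Bool => if q.2 then (A q.1).x else (A q.1).y

/-- Number of intersecting (unordered) pairs of arcs: the edge count of the
intersection graph. -/
noncomputable def edgeCount {n : ℕ} (A : Fin n → Arc) : ℕ :=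
  (Finset.univ.filter fun q : Fin n × Fin n =>
    q.1 < q.2 ∧ Intersects (A q.1) (A q.2)).card

/-- Number of doubly intersecting (unordered) pairs of arcs. -/
noncomputable def doubleCount {n : ℕ} (A : Fin n → Arc) : ℕ :=
  (Finset.univ.filter fun q : Fin n × Fin n =>
    q.1 < q.2 ∧ DoublyIntersects (A q.1) (A q.2)).card

/-- The running count at the point `q`: the number of arcs covering points
immediately clockwise of `q` (for an endpoint `q` of the family, an arc covers
points just clockwise of `q` iff `q` lies on the arc and `q` is not its right
endpoint, since all endpoints are distinct). -/
noncomputable def countAfter {n : ℕ} (A : Fin n → Arc) (q : ℝ) : ℕ :=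
  (Finset.univ.filter fun i => (A i).Mem q ∧ q ≠ (A i).y).card

/-- The running count sum: the sum of the running counts over all `2n` endpoints. -/
noncomputable def runningCountSum {n : ℕ} (A : Fin n → Arc) : ℕ :=
  ∑ i : Fin n, (countAfter A (A i).x + countAfter A (A i).y)

lemma arc_mem_self_x (A : Arc) : A.Mem A.x := by
  unfold Arc.Mem memArc; split_ifs with h
  · exact ⟨le_refl _, h⟩
  · exact Or.inl (le_refl _)

noncomputable def dccw (p q : ℝ) : ℝ := if q ≤ p then p - q else p - q + 1

lemma memArc_of_dccw {a b p q : ℝ} (ha : 0 ≤ a) (hq : q < 1)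
    (hp : memArc a b p) (hd : dccw p q ≤ dccw p a) : memArc a b q := by
  unfold memArc at hp ⊢
  unfold dccw at hd
  split_ifs at hp ⊢ with h1
  · obtain ⟨h2, h3⟩ := hp
    split_ifs at hd <;> constructor <;> linarith
  · rcases hp with h2 | h2 <;> split_ifs at hd <;>
      first
      | (left; linarith)
      | (right; linarith)

lemma charge_lemma {A B : Arc} {p : ℝ}
    (hAx : 0 ≤ A.x) (hAx1 : A.x < 1) (hBx : 0 ≤ B.x) (hBx1 : B.x < 1)
    (hA : A.Mem p) (hB : B.Mem p) : B.Mem A.x ∨ A.Mem B.x := by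
  by_cases h : dccw p A.x ≤ dccw p B.x
  · exact Or.inl (memArc_of_dccw hBx hAx1 hB h)
  · exact Or.inr (memArc_of_dccw hAx hBx1 hA (le_of_not_ge h))


/-- Voting bound: `n` voters approve among `N` candidates placed at distinct
points of the circle, each voter's approval set being an arc with endpoints at
candidate positions.  If the maximum number of arcs containing a common candidate
is `M`, then the number of pairs of arcs sharing a common candidate is at most
`(2nM - n²/N - n)/2`. -/
theorem voting_edge_bound {n N : ℕ} (hN : 0 < N) (c : Fin N → ℝ)
    (hc : ∀ j, c j ∈ Set.Ico (0 : ℝ) 1) (hcinj : Function.Injective c)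
    (A : Fin n → Arc)
    (hend : ∀ i, (∃ j, (A i).x = c j) ∧ ∃ j, (A i).y = c j)
    (M : ℕ)
    (hM : ∀ j : Fin N, (Finset.univ.filter fun i => (A i).Mem (c j)).card ≤ M)
    (hM' : ∃ j : Fin N, (Finset.univ.filter fun i => (A i).Mem (c j)).card = M) :
    (2 * (Finset.univ.filter fun q : Fin n × Fin n =>
        q.1 < q.2 ∧ ∃ j : Fin N, (A q.1).Mem (c j) ∧ (A q.2).Mem (c j)).card : ℝ)
      ≤ 2*n*M - (n:ℝ)^2/N - n := by
  classical
  have hax : ∀ i, ∃ j, (A i).x = c j := fun i => (hend i).1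
  choose f hf using hax
  have hx0 : ∀ i, 0 ≤ (A i).x := fun i => by rw [hf i]; exact (hc (f i)).1
  have hx1 : ∀ i, (A i).x < 1 := fun i => by rw [hf i]; exact (hc (f i)).2
  have hxeq : ∀ i i', f i = f i' → (A i).x = (A i').x := by
    intro i i' h; rw [hf i, hf i', h]
  set P : Finset (Fin n × Fin n) := Finset.univ.filter fun q : Fin n × Fin n =>
    q.1 < q.2 ∧ ∃ j : Fin N, (A q.1).Mem (c j) ∧ (A q.2).Mem (c j) with hPdef
  set Pe : Finset (Fin n × Fin n) := Finset.univ.filter fun q : Fin n × Fin n =>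
    q.1 < q.2 ∧ f q.1 = f q.2 with hPedef
  set S : Finset (Fin n × Fin n) := Finset.univ.filter fun q : Fin n × Fin n =>
    q.1 ≠ q.2 ∧ (A q.2).Mem ((A q.1).x) with hSdef
  set E : Finset (Fin n × Fin n) := Finset.univ.filter fun q : Fin n × Fin n =>
    q.1 ≠ q.2 ∧ f q.1 = f q.2 with hEdef
  have hPeP : Pe ⊆ P := by
    intro q hq
    simp only [hPedef, hPdef, Finset.mem_filter, Finset.mem_univ, true_and] at hq ⊢
    refine ⟨hq.1, f q.1, ?_, ?_⟩
    · rw [← hf q.1]; exact arc_mem_self_x _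
    · rw [hq.2, ← hf q.2]; exact arc_mem_self_x _
  set ch : Fin n × Fin n → Fin n × Fin n :=
    fun q => if (A q.2).Mem ((A q.1).x) then q else q.swap with hch
  have hchor : ∀ q, ch q = q ∨ ch q = q.swap := by
    intro q; rw [hch]; dsimp only; split_ifs <;> simp
  have hsub : ((P \ Pe).image ch) ∪ E ⊆ S := by
    intro r hr
    rw [Finset.mem_union] at hr
    rcases hr with hr | hr
    · obtain ⟨q, hq, rfl⟩ := Finset.mem_image.mp hr
      rw [Finset.mem_sdiff] at hq
      have hqP := hq.1
      simp only [hPdef, Finset.mem_filter, Finset.mem_univ, true_and] at hqP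
      obtain ⟨hlt, j, h1, h2⟩ := hqP
      have hne : q.1 ≠ q.2 := ne_of_lt hlt
      have hcl := charge_lemma (hx0 q.1) (hx1 q.1) (hx0 q.2) (hx1 q.2) h1 h2
      simp only [hSdef, Finset.mem_filter, Finset.mem_univ, true_and]
      rw [hch]; dsimp only
      split_ifs with hmem
      · exact ⟨hne, hmem⟩
      · rcases hcl with hcl | hcl
        · exact absurd hcl hmem
        · exact ⟨Ne.symm hne, hcl⟩
    · simp only [hEdef, Finset.mem_filter, Finset.mem_univ, true_and] at hr
      simp only [hSdef, Finset.mem_filter, Finset.mem_univ, true_and]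
      exact ⟨hr.1, by rw [hxeq _ _ hr.2]; exact arc_mem_self_x _⟩
  have hdisj : Disjoint ((P \ Pe).image ch) E := by
    rw [Finset.disjoint_left]
    intro r hr hrE
    obtain ⟨q, hq, rfl⟩ := Finset.mem_image.mp hr
    rw [Finset.mem_sdiff] at hq
    simp only [hEdef, Finset.mem_filter, Finset.mem_univ, true_and] at hrE
    have hqlt : q.1 < q.2 := by
      have h := hq.1
      simp only [hPdef, Finset.mem_filter, Finset.mem_univ, true_and] at h
      exact h.1
    apply hq.2
    simp only [hPedef, Finset.mem_filter, Finset.mem_univ, true_and]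
    refine ⟨hqlt, ?_⟩
    rcases hchor q with h | h <;> rw [h] at hrE
    · exact hrE.2
    · exact hrE.2.symm
  have hinj : Set.InjOn ch (↑(P \ Pe) : Set (Fin n × Fin n)) := by
    intro q hq q' hq' heq
    rw [Finset.mem_coe, Finset.mem_sdiff] at hq hq'
    have hlt : q.1 < q.2 := by
      have h := hq.1
      simp only [hPdef, Finset.mem_filter, Finset.mem_univ, true_and] at h
      exact h.1
    have hlt' : q'.1 < q'.2 := by
      have h := hq'.1
      simp only [hPdef, Finset.mem_filter, Finset.mem_univ, true_and] at h
      exact h.1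
    rcases hchor q with h | h <;> rcases hchor q' with h' | h' <;>
        rw [h, h'] at heq
    · exact heq
    · exfalso
      have h1 : q.1 = q'.2 := congrArg Prod.fst heq
      have h2 : q.2 = q'.1 := congrArg Prod.snd heq
      rw [h1, h2] at hlt; exact absurd hlt (not_lt_of_gt hlt')
    · exfalso
      have h1 : q.2 = q'.1 := congrArg Prod.fst heq
      have h2 : q.1 = q'.2 := congrArg Prod.snd heq
      rw [← h1, ← h2] at hlt'; exact absurd hlt' (not_lt_of_gt hlt)
    · have := congrArg Prod.swap heq
      rwa [Prod.swap_swap, Prod.swap_swap] at this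
  -- E has twice the cardinality of Pe
  have hEeq : E = Pe ∪ Pe.image Prod.swap := by
    ext q
    simp only [hEdef, hPedef, Finset.mem_union, Finset.mem_image, Finset.mem_filter,
      Finset.mem_univ, true_and]
    constructor
    · rintro ⟨hne, hfe⟩
      rcases lt_or_gt_of_ne hne with h | h
      · exact Or.inl ⟨h, hfe⟩
      · exact Or.inr ⟨q.swap, ⟨h, hfe.symm⟩, Prod.swap_swap q⟩
    · rintro (⟨h, hfe⟩ | ⟨a, ⟨h, hfe⟩, rfl⟩)
      · exact ⟨ne_of_lt h, hfe⟩
      · exact ⟨Ne.symm (ne_of_lt h), hfe.symm⟩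
  have hdisj2 : Disjoint Pe (Pe.image Prod.swap) := by
    rw [Finset.disjoint_left]
    intro q hq hq'
    simp only [hPedef, Finset.mem_filter, Finset.mem_univ, true_and] at hq
    obtain ⟨a, ha, rfl⟩ := Finset.mem_image.mp hq'
    simp only [hPedef, Finset.mem_filter, Finset.mem_univ, true_and] at ha
    exact absurd hq.1 (not_lt_of_gt ha.1)
  have hEcard : E.card = 2 * Pe.card := by
    rw [hEeq, Finset.card_union_of_disjoint hdisj2,
      Finset.card_image_of_injective _ Prod.swap_injective, two_mul]
  -- first main count : P.card + Pe.card ≤ S.card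
  have hcard1 : P.card + Pe.card ≤ S.card := by
    have h1 := Finset.card_le_card hsub
    rw [Finset.card_union_of_disjoint hdisj, Finset.card_image_of_injOn hinj,
        Finset.card_sdiff_of_subset hPeP, hEcard] at h1
    have h2 : Pe.card ≤ P.card := Finset.card_le_card hPeP
    omega
  -- second main count : S.card + n ≤ n * M
  have key : ∀ i : Fin n, (S.filter fun q => q.1 = i).card + 1
      = (Finset.univ.filter fun i' => (A i').Mem ((A i).x)).card := by
    intro i
    have himage : S.filter (fun q => q.1 = i)
        = ((Finset.univ.filter fun i' => (A i').Mem ((A i).x)).erase i).image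
            (fun i' => (i, i')) := by
      ext q
      simp only [hSdef, Finset.mem_filter, Finset.mem_univ, true_and, Finset.mem_image,
        Finset.mem_erase]
      constructor
      · rintro ⟨⟨hne, hmem⟩, h1⟩
        refine ⟨q.2, ⟨by rw [← h1]; exact Ne.symm hne, by rw [← h1]; exact hmem⟩, ?_⟩
        exact Prod.ext h1.symm rfl
      · rintro ⟨a, ⟨hne, hmem⟩, rfl⟩
        exact ⟨⟨Ne.symm hne, hmem⟩, rfl⟩
    have hmemi : i ∈ Finset.univ.filter fun i' => (A i').Mem ((A i).x) := by
      simp only [Finset.mem_filter, Finset.mem_univ, true_and]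
      exact arc_mem_self_x _
    have hpos : 1 ≤ (Finset.univ.filter fun i' => (A i').Mem ((A i).x)).card :=
      Finset.card_pos.mpr ⟨i, hmemi⟩
    rw [himage, Finset.card_image_of_injOn (fun a _ b _ h => (Prod.ext_iff.mp h).2),
      Finset.card_erase_of_mem hmemi, Nat.sub_add_cancel hpos]
  have hSM : S.card + n ≤ n * M := by
    have hfib := Finset.card_eq_sum_card_fiberwise
      (f := fun q : Fin n × Fin n => q.1) (s := S) (t := Finset.univ)
      (fun q _ => Finset.mem_univ _)
    have hsum : S.card + n
        = ∑ i : Fin n, (Finset.univ.filter fun i' => (A i').Mem ((A i).x)).card := by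
      rw [hfib]
      rw [← Finset.sum_congr rfl (fun i (_ : i ∈ Finset.univ) => key i)]
      rw [Finset.sum_add_distrib, Finset.sum_const, smul_eq_mul, mul_one,
        Finset.card_univ, Fintype.card_fin]
    rw [hsum]
    calc ∑ i : Fin n, (Finset.univ.filter fun i' => (A i').Mem ((A i).x)).card
        ≤ ∑ _i : Fin n, M := by
          refine Finset.sum_le_sum fun i _ => ?_
          simp only [hf i]
          exact hM (f i)
      _ = n * M := by
          rw [Finset.sum_const, smul_eq_mul, Finset.card_univ, Fintype.card_fin]
  -- counting equal-left-endpoint pairs via fibers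
  set b : Fin N → ℕ := fun j => (Finset.univ.filter fun i => f i = j).card with hbdef
  set EQ : Finset (Fin n × Fin n) := Finset.univ.filter fun q => f q.1 = f q.2 with hEQdef
  have hEQ1 : EQ.card = 2 * Pe.card + n := by
    have hsplit : EQ = E ∪ Finset.univ.filter (fun q : Fin n × Fin n => q.1 = q.2) := by
      ext q
      simp only [hEQdef, hEdef, Finset.mem_union, Finset.mem_filter, Finset.mem_univ,
        true_and]
      constructor
      · intro hfe
        by_cases h : q.1 = q.2
        · exact Or.inr h
        · exact Or.inl ⟨h, hfe⟩
      · rintro (⟨_, hfe⟩ | h)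
        · exact hfe
        · rw [h]
    have hd3 : Disjoint E (Finset.univ.filter (fun q : Fin n × Fin n => q.1 = q.2)) := by
      rw [Finset.disjoint_left]
      intro q hq hq'
      simp only [hEdef, Finset.mem_filter, Finset.mem_univ, true_and] at hq
      simp only [Finset.mem_filter, Finset.mem_univ, true_and] at hq'
      exact hq.1 hq'
    have hdiag : (Finset.univ.filter (fun q : Fin n × Fin n => q.1 = q.2)).card = n := by
      have : Finset.univ.filter (fun q : Fin n × Fin n => q.1 = q.2)
          = Finset.univ.image (fun i : Fin n => (i, i)) := by
        ext q
        simp only [Finset.mem_filter, Finset.mem_univ, true_and, Finset.mem_image]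
        constructor
        · intro h
          exact ⟨q.1, Prod.ext rfl h⟩
        · rintro ⟨a, rfl⟩; rfl
      rw [this, Finset.card_image_of_injective _ (fun a b h => (Prod.ext_iff.mp h).1),
        Finset.card_univ, Fintype.card_fin]
    rw [hsplit, Finset.card_union_of_disjoint hd3, hEcard, hdiag]
  have hEQ2 : EQ.card = ∑ j : Fin N, (b j)^2 := by
    rw [Finset.card_eq_sum_card_fiberwise
      (f := fun q : Fin n × Fin n => f q.1) (t := Finset.univ) (fun _ _ => Finset.mem_univ _)]
    refine Finset.sum_congr rfl fun j _ => ?_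
    have heq : EQ.filter (fun q => f q.1 = j)
        = (Finset.univ.filter fun i => f i = j) ×ˢ (Finset.univ.filter fun i => f i = j) := by
      ext q
      simp only [hEQdef, Finset.mem_filter, Finset.mem_univ, true_and, Finset.mem_product]
      constructor
      · rintro ⟨hfe, hj⟩
        exact ⟨hj, hfe.symm.trans hj⟩
      · rintro ⟨h1, h2⟩
        exact ⟨h1.trans h2.symm, h1⟩
    rw [heq, Finset.card_product, hbdef, sq]
  have hbn : ∑ j : Fin N, b j = n := by
    have := Finset.card_eq_sum_card_fiberwise
      (f := f) (s := Finset.univ) (t := Finset.univ) (fun i _ => Finset.mem_univ (f i))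
    rw [Finset.card_univ, Fintype.card_fin] at this
    exact this.symm
  -- Cauchy-Schwarz
  have hsumR : ∑ j : Fin N, (b j : ℝ) = n := by exact_mod_cast hbn
  have hcs := sq_sum_le_card_mul_sum_sq (s := (Finset.univ : Finset (Fin N)))
    (f := fun j => (b j : ℝ))
  rw [hsumR, Finset.card_univ, Fintype.card_fin] at hcs
  -- assemble over ℝ
  have hNR : (0:ℝ) < N := by exact_mod_cast hN
  have hBR : ∑ j : Fin N, (b j : ℝ)^2 = 2*(Pe.card:ℝ) + n := by
    have : ((∑ j : Fin N, (b j)^2 : ℕ) : ℝ) = ∑ j : Fin N, (b j : ℝ)^2 := by push_cast; ring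
    rw [← this, ← hEQ2, hEQ1]; push_cast; ring
  have hdiv : (n:ℝ)^2 / N ≤ 2*(Pe.card:ℝ) + n := by
    rw [div_le_iff₀ hNR]
    rw [hBR] at hcs
    nlinarith [hcs]
  have h1R : (P.card:ℝ) + Pe.card ≤ S.card := by exact_mod_cast hcard1
  have h2R : (S.card:ℝ) + n ≤ n*M := by exact_mod_cast hSM
  linarith
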